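/- arXiv:2502.16712 — 2 statements merged into one kernel-verified Lean document; each statement's English description precedes it below -/
import Mathlib

section
/- Let G and H be locally compact Hausdorff maximally almost periodic groups and let T : AP(G) → AP(H) be a non-vanishing linear isometry that respects finite-dimensional unitary representations. Fix x ∈ G and let (f_n)_{n<ω} be a sequence in AP(G) such that ‖f_n‖ = |f_n(x)| for every n. Then there exists a single point y ∈ H such that ‖T f_n‖ = |(T f_n)(y)| for every n. -/
open scoped BoundedContinuousFunction

noncomputable section

/-- A complex-valued function on a group is *almost periodic* if for every `ε > 0` there is a
finite cover `G = G₁ ∪ … ∪ Gₙ` with `|f (z*x*w) - f (z*y*w)| < ε` whenever `x, y` lie in a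
common member of the cover. -/
def IsAlmostPeriodic {G : Type*} [Group G] (f : G → ℂ) : Prop :=
  ∀ ε : ℝ, 0 < ε → ∃ (n : ℕ) (S : Fin n → Set G),
    (⋃ i, S i) = (Set.univ : Set G) ∧
    ∀ (i : Fin n), ∀ z w x y : G, x ∈ S i → y ∈ S i →
      ‖f (z * x * w) - f (z * y * w)‖ < ε

/-- A continuous finite-dimensional unitary representation, in matrix form. -/
def IsUnitaryRep {G : Type*} [Group G] [TopologicalSpace G] (n : ℕ)
    (D : G → Matrix (Fin n) (Fin n) ℂ) : Prop :=
  Continuous D ∧ (∀ g, D g ∈ Matrix.unitaryGroup (Fin n) ℂ) ∧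
    ∀ a b : G, D (a * b) = D a * D b

/-- Maximal almost periodicity: continuous finite-dimensional unitary representations separate
points. -/
def MAPGroup (G : Type*) [Group G] [TopologicalSpace G] : Prop :=
  ∀ ⦃x y : G⦄, x ≠ y → ∃ (n : ℕ) (D : G → Matrix (Fin n) (Fin n) ℂ),
    IsUnitaryRep n D ∧ D x ≠ D y

/-- A continuous character: a continuous homomorphism into the circle group `𝕋 ⊆ ℂ`. -/
def IsCharacter {H : Type*} [Group H] [TopologicalSpace H] (γ : H → ℂ) : Prop :=
  Continuous γ ∧ (∀ h, ‖γ h‖ = 1) ∧ ∀ a b : H, γ (a * b) = γ a * γ b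

/-- `T` respects (finite-dimensional) unitary representations: for every continuous
homomorphism `D = (d_{jk})` of `G` into `U(n)`, the matrix `(T d_{jk})` defines a continuous
homomorphism of `H` into `U(n)`. -/
def RespectsUnitaryRepsB {G H : Type*} [Group G] [TopologicalSpace G]
    [Group H] [TopologicalSpace H] (T : (G →ᵇ ℂ) → (H →ᵇ ℂ)) : Prop :=
  ∀ (n : ℕ) (d : Matrix (Fin n) (Fin n) (G →ᵇ ℂ)),
    (∀ g : G, (Matrix.of fun j k => d j k g) ∈ Matrix.unitaryGroup (Fin n) ℂ) →
    (∀ a b : G, (Matrix.of fun j k => d j k (a * b)) =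
      (Matrix.of fun j k => d j k a) * (Matrix.of fun j k => d j k b)) →
    (∀ h : H, (Matrix.of fun j k => T (d j k) h) ∈ Matrix.unitaryGroup (Fin n) ℂ) ∧
    (∀ a b : H, (Matrix.of fun j k => T (d j k) (a * b)) =
      (Matrix.of fun j k => T (d j k) a) * (Matrix.of fun j k => T (d j k) b))

/-- The Bohr topology on a topological group: the initial topology induced by the family of all
continuous finite-dimensional unitary representations. -/
def bohrTopology (G : Type*) [Group G] [TopologicalSpace G] : TopologicalSpace G :=
  ⨅ (n : ℕ) (D : {D : G → Matrix (Fin n) (Fin n) ℂ // IsUnitaryRep n D}),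
    TopologicalSpace.induced D.1 inferInstance

/-- A topological group respects compactness if every subset compact in the Bohr topology is
compact in the original topology. -/
def RespectsCompactness (G : Type*) [Group G] [TopologicalSpace G] : Prop :=
  ∀ s : Set G, @IsCompact G (bohrTopology G) s → IsCompact s

universe u
/-- A space is realcompact if it admits a closed embedding into a product of copies of `ℝ`. -/
def IsRealcompact (X : Type u) (τ : TopologicalSpace X) : Prop :=
  ∃ (ι : Type u) (f : X → ι → ℝ), @Topology.IsClosedEmbedding X (ι → ℝ) τ inferInstance f

/-!
Rescale each `fₙ` by a unimodular scalar and a geometric weight to `gₙ` with `gₙ x = ‖gₙ‖` and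
`∑ ‖gₙ‖ < ∞`, and put `F = ∑ gₙ`. The function `F x • 1 - F` vanishes at `x`, so its image
vanishes at some `y`, i.e. `T F y = F x * T 1 y`. Since `T` carries the trivial representation
to a unitary `1 × 1` representation, `|T 1| ≡ 1`, whence `|T F y| = ∑ ‖gₙ‖`. But
`T F y = ∑ T gₙ y` with `|T gₙ y| ≤ ‖T gₙ‖ = ‖gₙ‖`, so every term is extremal:
`|T gₙ y| = ‖T gₙ‖`, and dividing out the scalars gives the claim for the `fₙ`.
-/

section AlmostPeriodic

variable {G : Type*} [Group G]

lemma isAlmostPeriodic_const (c : ℂ) : IsAlmostPeriodic fun _ : G => c :=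
  fun ε hε => ⟨1, fun _ => Set.univ, Set.iUnion_const _, fun _ _ _ _ _ _ _ => by simpa using hε⟩

lemma IsAlmostPeriodic.const_smul {f : G → ℂ} (hf : IsAlmostPeriodic f) (c : ℂ) :
    IsAlmostPeriodic (c • f) := by
  intro ε hε
  obtain ⟨n, S, hS, hfS⟩ := hf (ε / (‖c‖ + 1)) (by positivity)
  refine ⟨n, S, hS, fun i z w x y hx hy => ?_⟩
  calc ‖(c • f) (z * x * w) - (c • f) (z * y * w)‖
      = ‖c‖ * ‖f (z * x * w) - f (z * y * w)‖ := by
        simp only [Pi.smul_apply, smul_eq_mul, ← mul_sub, norm_mul]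
    _ ≤ ‖c‖ * (ε / (‖c‖ + 1)) := by gcongr; exact (hfS i z w x y hx hy).le
    _ < ε := by
      rw [mul_div_assoc', div_lt_iff₀ (by positivity)]
      nlinarith [norm_nonneg c]

lemma IsAlmostPeriodic.add {f g : G → ℂ} (hf : IsAlmostPeriodic f) (hg : IsAlmostPeriodic g) :
    IsAlmostPeriodic (f + g) := by
  intro ε hε
  obtain ⟨m, S, hS, hfS⟩ := hf (ε / 2) (by positivity)
  obtain ⟨n, R, hR, hgR⟩ := hg (ε / 2) (by positivity)
  refine ⟨m * n, fun k => S (finProdFinEquiv.symm k).1 ∩ R (finProdFinEquiv.symm k).2, ?_, ?_⟩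
  · refine Set.eq_univ_of_forall fun t => Set.mem_iUnion.2 ?_
    obtain ⟨i, hi⟩ := Set.mem_iUnion.1 (hS.symm ▸ Set.mem_univ t)
    obtain ⟨j, hj⟩ := Set.mem_iUnion.1 (hR.symm ▸ Set.mem_univ t)
    exact ⟨finProdFinEquiv (i, j), by simpa using ⟨hi, hj⟩⟩
  · intro k z w x y hx hy
    calc ‖(f + g) (z * x * w) - (f + g) (z * y * w)‖
        ≤ ‖f (z * x * w) - f (z * y * w)‖ + ‖g (z * x * w) - g (z * y * w)‖ := by
          simp only [Pi.add_apply, add_sub_add_comm]; exact norm_add_le _ _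
      _ < ε / 2 + ε / 2 := add_lt_add (hfS _ z w x y hx.1 hy.1) (hgR _ z w x y hx.2 hy.2)
      _ = ε := add_halves ε

variable [TopologicalSpace G]

lemma isClosed_setOf_isAlmostPeriodic : IsClosed {f : G →ᵇ ℂ | IsAlmostPeriodic ⇑f} := by
  refine isClosed_of_closure_subset fun f hf ε hε => ?_
  obtain ⟨g, hg, hfg⟩ := Metric.mem_closure_iff.1 hf (ε / 3) (by positivity)
  obtain ⟨n, S, hS, hgS⟩ := (hg : IsAlmostPeriodic ⇑g) (ε / 3) (by positivity)
  refine ⟨n, S, hS, fun i z w x y hx hy => ?_⟩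
  have hclose : ∀ a, dist (f a) (g a) < ε / 3 := fun a =>
    (BoundedContinuousFunction.dist_coe_le_dist a).trans_lt hfg
  rw [← dist_eq_norm]
  calc dist (f (z * x * w)) (f (z * y * w))
      ≤ dist (f (z * x * w)) (g (z * x * w)) + dist (g (z * x * w)) (g (z * y * w))
          + dist (g (z * y * w)) (f (z * y * w)) := dist_triangle4 ..
    _ < ε / 3 + ε / 3 + ε / 3 := by
      gcongr
      · exact hclose _
      · rw [dist_eq_norm]; exact hgS i z w x y hx hy
      · rw [dist_comm]; exact hclose _
    _ = ε := by ring

variable (G) in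
def almostPeriodicSubmodule : Submodule ℂ (G →ᵇ ℂ) where
  carrier := {f | IsAlmostPeriodic ⇑f}
  add_mem' hf hg := hf.add hg
  zero_mem' := isAlmostPeriodic_const 0
  smul_mem' c _ hf := hf.const_smul c

instance : CompleteSpace (almostPeriodicSubmodule G) :=
  isClosed_setOf_isAlmostPeriodic.completeSpace_coe

lemma one_mem_almostPeriodicSubmodule : (1 : G →ᵇ ℂ) ∈ almostPeriodicSubmodule G :=
  isAlmostPeriodic_const 1

end AlmostPeriodic

lemma norm_apply_zero_zero_eq_one_of_mem_unitaryGroup {M : Matrix (Fin 1) (Fin 1) ℂ}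
    (hM : M ∈ Matrix.unitaryGroup (Fin 1) ℂ) : ‖M 0 0‖ = 1 := by
  have h := congr_fun₂ (Matrix.mem_unitaryGroup_iff'.1 hM) 0 0
  simp only [Matrix.mul_apply, Finset.univ_unique, Fin.default_eq_zero, Finset.sum_singleton,
    Matrix.star_apply, Matrix.one_apply_eq, RCLike.star_def, Complex.conj_mul'] at h
  exact (pow_eq_one_iff_of_nonneg (norm_nonneg _) two_ne_zero).1 (by exact_mod_cast h)

lemma RespectsUnitaryRepsB.norm_apply_one {G H : Type*} [Group G] [TopologicalSpace G] [Group H]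
    [TopologicalSpace H] {T : (G →ᵇ ℂ) → (H →ᵇ ℂ)} (hT : RespectsUnitaryRepsB T) (y : H) :
    ‖T 1 y‖ = 1 := by
  have hone : ∀ g : G, (Matrix.of fun _ _ : Fin 1 => (1 : G →ᵇ ℂ) g) = 1 := fun g => by
    ext i j
    fin_cases i; fin_cases j
    rfl
  obtain ⟨hunitary, -⟩ := hT 1 (fun _ _ => 1) (fun g => hone g ▸ one_mem _)
    (fun a b => by simp only [hone, mul_one])
  exact norm_apply_zero_zero_eq_one_of_mem_unitaryGroup (hunitary y)

lemma norm_eq_of_tsum_le_norm_tsum {ι E : Type*} [SeminormedAddCommGroup E] {b : ι → E}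
    {r : ι → ℝ} (hr : Summable r) (hb : ∀ i, ‖b i‖ ≤ r i) (hsum : ∑' i, r i ≤ ‖∑' i, b i‖)
    (i : ι) : ‖b i‖ = r i := by
  have hbs : Summable fun i => ‖b i‖ := hr.of_nonneg_of_le (fun _ => norm_nonneg _) hb
  refine (hb i).antisymm (not_lt.1 fun hlt => ?_)
  linarith [hbs.tsum_lt_tsum hb hlt hr, norm_tsum_le_tsum_norm hbs]

namespace BoundedContinuousFunction

variable {X Y : Type*} [TopologicalSpace X] [TopologicalSpace Y]

lemma exists_smul_apply_eq_norm {f : X →ᵇ ℂ} {x : X} (hf : ‖f‖ = ‖f x‖) {ε : ℝ} (hε : 0 < ε) :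
    ∃ a : ℂ, a ≠ 0 ∧ ‖a • f‖ ≤ ε ∧ (a • f) x = ‖a • f‖ := by
  obtain ⟨ω, hω, hωf⟩ := Complex.exists_norm_eq_mul_self (f x)
  set t := ε / (‖f‖ + 1)
  have ht : 0 < t := by positivity
  have hnorm : ‖((t : ℂ) * ω) • f‖ = t * ‖f‖ := by
    rw [norm_smul, norm_mul, hω, Complex.norm_real, Real.norm_of_nonneg ht.le, mul_one]
  refine ⟨t * ω, mul_ne_zero (by exact_mod_cast ht.ne') (norm_ne_zero_iff.1 (by simp [hω])),
    ?_, ?_⟩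
  · rw [hnorm, mul_comm, ← le_div_iff₀ ht, div_div_eq_mul_div, le_div_iff₀ hε]
    nlinarith
  · rw [hnorm, smul_apply, smul_eq_mul, mul_assoc, ← hωf, ← hf]
    push_cast
    ring

variable {V : Submodule ℂ (X →ᵇ ℂ)} (h1 : (1 : X →ᵇ ℂ) ∈ V) {x : X}

lemma exists_apply_eq_mul_apply_one (L : V →ₗ[ℂ] (Y →ᵇ ℂ))
    (hL : ∀ u : V, (u : X →ᵇ ℂ) x = 0 → ∃ y, L u y = 0) (F : V) :
    ∃ y, L F y = (F : X →ᵇ ℂ) x * L ⟨1, h1⟩ y := by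
  obtain ⟨y, hy⟩ := hL ((F : X →ᵇ ℂ) x • ⟨1, h1⟩ - F) (by simp)
  refine ⟨y, ?_⟩
  simp only [map_sub, map_smul, coe_sub, coe_smul, Pi.sub_apply, smul_eq_mul] at hy
  linear_combination -hy

theorem exists_forall_norm_apply_eq_norm [CompleteSpace V] (L : V →ₗᵢ[ℂ] (Y →ᵇ ℂ))
    (hL1 : ∀ y, ‖L ⟨1, h1⟩ y‖ = 1) (hL : ∀ u : V, (u : X →ᵇ ℂ) x = 0 → ∃ y, L u y = 0)
    (f : ℕ → V) (hf : ∀ n, ‖f n‖ = ‖(f n : X →ᵇ ℂ) x‖) :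
    ∃ y, ∀ n, ‖L (f n)‖ = ‖L (f n) y‖ := by
  choose a ha hle hpeak using fun n => exists_smul_apply_eq_norm (hf n) (pow_pos one_half_pos n)
  set g : ℕ → V := fun n => a n • f n
  have hg : Summable g := Summable.of_norm_bounded summable_geometric_two hle
  have hgn : Summable fun n => ‖g n‖ :=
    summable_geometric_two.of_nonneg_of_le (fun _ => norm_nonneg _) hle
  obtain ⟨y, hy⟩ := exists_apply_eq_mul_apply_one h1 L.toLinearMap hL (∑' n, g n)
  simp only [LinearIsometry.coe_toLinearMap] at hy
  have hFx : ((∑' n, g n : V) : X →ᵇ ℂ) x = ∑' n, (‖g n‖ : ℂ) :=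
    calc ((∑' n, g n : V) : X →ᵇ ℂ) x = ((evalCLM ℂ x).comp V.subtypeL) (∑' n, g n) := rfl
      _ = ∑' n, (‖g n‖ : ℂ) :=
        (((evalCLM ℂ x).comp V.subtypeL).map_tsum hg).trans (tsum_congr hpeak)
  have hFy : L (∑' n, g n) y = ∑' n, L (g n) y :=
    ((evalCLM ℂ y).comp L.toContinuousLinearMap).map_tsum hg
  have hsum : ∑' n, ‖g n‖ ≤ ‖∑' n, L (g n) y‖ := by
    rw [← hFy, hy, norm_mul, hL1, mul_one, hFx,
      ← Complex.ofReal_tsum, Complex.norm_real,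
      Real.norm_of_nonneg (tsum_nonneg fun _ => norm_nonneg _)]
  refine ⟨y, fun n => ?_⟩
  have hgy := norm_eq_of_tsum_le_norm_tsum hgn
    (fun n => (norm_coe_le_norm (L (g n)) y).trans_eq (L.norm_map _)) hsum n
  rw [L.map_smul, smul_apply, smul_eq_mul, norm_mul, norm_smul] at hgy
  rw [L.norm_map, mul_left_cancel₀ (norm_ne_zero_iff.2 (ha n)) hgy]

end BoundedContinuousFunction

theorem exists_common_norm_attaining_point_general
    {G H : Type u} [Group G] [TopologicalSpace G]
    [Group H] [TopologicalSpace H]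
    (T : (G →ᵇ ℂ) → (H →ᵇ ℂ))
    (hTadd : ∀ f g : G →ᵇ ℂ, IsAlmostPeriodic ⇑f → IsAlmostPeriodic ⇑g →
      T (f + g) = T f + T g)
    (hTsmul : ∀ (c : ℂ) (f : G →ᵇ ℂ), IsAlmostPeriodic ⇑f → T (c • f) = c • T f)
    (hTiso : ∀ f : G →ᵇ ℂ, IsAlmostPeriodic ⇑f → ‖T f‖ = ‖f‖)
    (hTnv : ∀ f : G →ᵇ ℂ, IsAlmostPeriodic ⇑f →
      ((∀ y : H, T f y ≠ 0) ↔ ∀ x : G, f x ≠ 0))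
    (hTrep : RespectsUnitaryRepsB T)
    (x : G) (f : ℕ → (G →ᵇ ℂ))
    (hfap : ∀ n : ℕ, IsAlmostPeriodic ⇑(f n))
    (hfx : ∀ n : ℕ, ‖f n‖ = ‖f n x‖) :
    ∃ y : H, ∀ n : ℕ, ‖T (f n)‖ = ‖T (f n) y‖ := by
  let L : almostPeriodicSubmodule G →ₗᵢ[ℂ] (H →ᵇ ℂ) :=
    { toFun := fun u => T u
      map_add' := fun u v => hTadd u v u.2 v.2
      map_smul' := fun c u => hTsmul c u u.2
      norm_map' := fun u => hTiso u u.2 }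
  have hvanish : ∀ u : almostPeriodicSubmodule G, (u : G →ᵇ ℂ) x = 0 → ∃ y, L u y = 0 := by
    intro u hu
    by_contra! h
    exact (hTnv u u.2).1 h x hu
  exact BoundedContinuousFunction.exists_forall_norm_apply_eq_norm
    one_mem_almostPeriodicSubmodule L hTrep.norm_apply_one hvanish (fun n => ⟨f n, hfap n⟩) hfx

/-- Let `G`, `H` be locally compact Hausdorff maximally almost periodic groups and
`T : AP(G) → AP(H)` a non-vanishing linear isometry respecting finite-dimensional unitary
representations. If `x ∈ G` and `(fₙ)` is a sequence in `AP(G)` with `‖fₙ‖ = |fₙ x|` for every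
`n`, then there is a single `y ∈ H` with `‖T fₙ‖ = |(T fₙ) y|` for every `n`. -/
theorem exists_common_norm_attaining_point
    {G H : Type u} [Group G] [TopologicalSpace G] [IsTopologicalGroup G]
    [LocallyCompactSpace G] [T2Space G]
    [Group H] [TopologicalSpace H] [IsTopologicalGroup H]
    [LocallyCompactSpace H] [T2Space H]
    (hGmap : MAPGroup G) (hHmap : MAPGroup H)
    (T : (G →ᵇ ℂ) → (H →ᵇ ℂ))
    (hTap : ∀ f : G →ᵇ ℂ, IsAlmostPeriodic ⇑f → IsAlmostPeriodic ⇑(T f))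
    (hTadd : ∀ f g : G →ᵇ ℂ, IsAlmostPeriodic ⇑f → IsAlmostPeriodic ⇑g →
      T (f + g) = T f + T g)
    (hTsmul : ∀ (c : ℂ) (f : G →ᵇ ℂ), IsAlmostPeriodic ⇑f → T (c • f) = c • T f)
    (hTiso : ∀ f : G →ᵇ ℂ, IsAlmostPeriodic ⇑f → ‖T f‖ = ‖f‖)
    (hTnv : ∀ f : G →ᵇ ℂ, IsAlmostPeriodic ⇑f →
      ((∀ y : H, T f y ≠ 0) ↔ ∀ x : G, f x ≠ 0))
    (hTrep : RespectsUnitaryRepsB T)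
    (x : G) (f : ℕ → (G →ᵇ ℂ))
    (hfap : ∀ n : ℕ, IsAlmostPeriodic ⇑(f n))
    (hfx : ∀ n : ℕ, ‖f n‖ = ‖f n x‖) :
    ∃ y : H, ∀ n : ℕ, ‖T (f n)‖ = ‖T (f n) y‖ :=
  exists_common_norm_attaining_point_general T hTadd hTsmul hTiso hTnv hTrep x f hfap hfx

end
end

section
/- Let G be a σ-compact maximally almost periodic locally compact Hausdorff group, let H be a locally compact Hausdorff group, and let t : H → G be a group homomorphism that is continuous as a map from H into G endowed with its Bohr topology. Then t is continuous as a map from H into G with its original locally compact topology. -/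
open scoped BoundedContinuousFunction

noncomputable section

universe u
/-!
The Bohr topology is coarser than the original one and, `G` being MAP, Hausdorff; so compact
subsets of `G` are Bohr-closed, and their preimages under `t` are closed in `H`. Covering the
σ-compact group `G` by countably many compact sets, the Baire category theorem in `H` yields a
compact `K ⊆ G` and a point `h₀` such that `t ⁻¹' K` is a neighbourhood of `h₀`. On `K` the
original and the Bohr topologies coincide (a continuous bijection from a compact space onto a
Hausdorff space is a homeomorphism), so `t` is continuous at `h₀`, and a homomorphism of
topological groups continuous at one point is continuous.
-/

open Topology Filter

theorem le_bohrTopology (G : Type*) [Group G] [t : TopologicalSpace G] : t ≤ bohrTopology G :=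
  le_iInf₂ fun _ D => continuous_iff_le_induced.mp D.2.1

theorem IsUnitaryRep.continuous_bohrTopology {G : Type*} [Group G] [TopologicalSpace G] {n : ℕ}
    {D : G → Matrix (Fin n) (Fin n) ℂ} (hD : IsUnitaryRep n D) :
    @Continuous G _ (bohrTopology G) _ D :=
  continuous_iff_le_induced.mpr <| iInf_le_of_le n <|
    iInf_le (fun D : {D // IsUnitaryRep n D} => TopologicalSpace.induced D.1 inferInstance)
      ⟨D, hD⟩

theorem MAPGroup.t2Space_bohrTopology {G : Type*} [Group G] [TopologicalSpace G]
    (hG : MAPGroup G) : @T2Space G (bohrTopology G) :=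
  @T2Space.mk G (bohrTopology G) fun _ _ hxy =>
    let ⟨_, _, hD, hne⟩ := hG hxy
    @separated_by_continuous G _ (bohrTopology G) _ _ _ hD.continuous_bohrTopology _ _ hne

theorem MAPGroup.isClosed_bohrTopology_of_isCompact {G : Type*} [Group G] [TopologicalSpace G]
    (hG : MAPGroup G) {K : Set G} (hK : IsCompact K) : IsClosed[bohrTopology G] K := by
  have hK' : @IsCompact G (bohrTopology G) K := by
    simpa using @IsCompact.image G G _ (bohrTopology G) K id hK
      (continuous_id_of_le (le_bohrTopology G))
  exact @IsCompact.isClosed G (bohrTopology G) hG.t2Space_bohrTopology K hK'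

theorem ContinuousAt.of_coarser_of_isCompact {X α : Type*} [TopologicalSpace X]
    {τ₁ τ₂ : TopologicalSpace α} (hle : τ₁ ≤ τ₂) (hT2 : @T2Space α τ₂) {K : Set α}
    (hK : @IsCompact α τ₁ K) {f : X → α} {x : X} (hf : @ContinuousAt X α _ τ₂ f x)
    (hKx : f ⁻¹' K ∈ 𝓝 x) : @ContinuousAt X α _ τ₁ f x := by
  refine tendsto_iff_ultrafilter _ _ _ |>.2 fun F hF => ?_
  obtain ⟨y, -, hy⟩ := @IsCompact.ultrafilter_le_nhds α τ₁ K hK (F.map f)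
    (le_principal_iff.2 (hF hKx))
  obtain rfl : y = f x := (@t2_iff_ultrafilter α τ₂).1 hT2 _
    (hy.trans (nhds_mono hle)) (hf.mono_left hF)
  exact hy

theorem exists_isCompact_preimage_mem_nhds {X Y : Type*} [TopologicalSpace X] [BaireSpace X]
    [Nonempty X] [TopologicalSpace Y] [SigmaCompactSpace Y] {f : X → Y}
    (hf : ∀ K, IsCompact K → IsClosed (f ⁻¹' K)) :
    ∃ K, IsCompact K ∧ ∃ x, f ⁻¹' K ∈ 𝓝 x := by
  have hcover : ⋃ n, f ⁻¹' compactCovering Y n = Set.univ := by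
    rw [← Set.preimage_iUnion, iUnion_compactCovering, Set.preimage_univ]
  obtain ⟨n, x, hx⟩ := nonempty_interior_of_iUnion_of_closed
    (fun n => hf _ (isCompact_compactCovering Y n)) hcover
  exact ⟨_, isCompact_compactCovering Y n, x, mem_interior_iff_mem_nhds.1 hx⟩

theorem MonoidHom.continuous_of_continuousAt {G H : Type*} [Group G] [TopologicalSpace G]
    [IsTopologicalGroup G] [Group H] [TopologicalSpace H] [IsTopologicalGroup H] (f : G →* H)
    {x : G} (hf : ContinuousAt f x) : Continuous f := by
  refine continuous_of_continuousAt_one f ?_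
  have hleft : ContinuousAt (fun y => (f x)⁻¹ * f (x * y)) 1 :=
    continuousAt_const.mul (hf.comp_of_eq (continuous_const_mul x).continuousAt (mul_one x))
  simpa only [map_mul, inv_mul_cancel_left] using hleft

theorem bohr_continuous_hom_is_continuous_sigmaCompact_general
    {G H : Type u} [Group G] [tG : TopologicalSpace G] [IsTopologicalGroup G]
    [SigmaCompactSpace G]
    [Group H] [tH : TopologicalSpace H] [IsTopologicalGroup H]
    [LocallyCompactSpace H]
    (hGmap : MAPGroup G)
    (t : H → G) (hhom : ∀ a b : H, t (a * b) = t a * t b)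
    (hbohr : @Continuous H G tH (bohrTopology G) t) :
    Continuous t := by
  obtain ⟨K, hK, h₀, hKh₀⟩ := exists_isCompact_preimage_mem_nhds (f := t) fun K hK =>
    @IsClosed.preimage H G _ (bohrTopology G) t hbohr K
      (hGmap.isClosed_bohrTopology_of_isCompact hK)
  have ht : ContinuousAt t h₀ := ContinuousAt.of_coarser_of_isCompact (le_bohrTopology G)
    hGmap.t2Space_bohrTopology hK
    (@Continuous.continuousAt H G _ (bohrTopology G) t h₀ hbohr) hKh₀
  exact (MonoidHom.mk' t hhom).continuous_of_continuousAt ht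

/-- Let `G` be a σ-compact maximally almost periodic locally compact Hausdorff group, `H` a
locally compact Hausdorff group, and `t : H → G` a group homomorphism that is continuous into
`G` with its Bohr topology. Then `t` is continuous into `G` with its original topology. -/
theorem bohr_continuous_hom_is_continuous_sigmaCompact
    {G H : Type u} [Group G] [tG : TopologicalSpace G] [IsTopologicalGroup G]
    [LocallyCompactSpace G] [T2Space G] [SigmaCompactSpace G]
    [Group H] [tH : TopologicalSpace H] [IsTopologicalGroup H]
    [LocallyCompactSpace H] [T2Space H]
    (hGmap : MAPGroup G)
    (t : H → G) (hhom : ∀ a b : H, t (a * b) = t a * t b)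
    (hbohr : @Continuous H G tH (bohrTopology G) t) :
    Continuous t :=
  bohr_continuous_hom_is_continuous_sigmaCompact_general (tG := tG) (tH := tH) hGmap t hhom hbohr
end
end
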